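/- arXiv:1807.04809 — 3 statements merged into one kernel-verified Lean document; each statement's English description precedes it below -/
import Mathlib

section
/- Let β ∈ (1/2, 1) be such that 1/β is a PV number. Then there exists a constant c̄ > 0 such that for all n ≥ 1, any two distinct points of the form Σ_{k=0}^{n-1} ε_k β^k with ε_k ∈ {−1, 1} differ by at least c̄ · β^n. -/
def IsPVNumber (α : ℝ) : Prop :=
  1 < α ∧ IsIntegral ℤ α ∧
    ∀ z : ℂ, Polynomial.aeval z (minpoly ℤ α) = 0 → z ≠ (α : ℂ) → ‖z‖ < 1

/-!
Write `α = 1/β`. After factoring out `β ^ (n - 1)`, the difference of two signed sums becomes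
`S = ∑ dₖ α ^ (n - 1 - k)` with integers `|dₖ| ≤ 2`, so it suffices to bound a nonzero `S` below
uniformly. `S` is the image of an algebraic integer `x ∈ ℚ(α)` under the real embedding, and the
absolute value of the norm of `x` is a nonzero integer, hence
`1 ≤ ∏_σ ‖σ x‖ = |S| · ∏_{σ ≠ id} ‖σ x‖`. Every other conjugate `σ α` lies in the open unit disc,
so each `‖σ x‖` is bounded by the geometric series `2 / (1 - ‖σ α‖)`, independently of `n`.
-/

open Polynomial IntermediateField Finset

theorem NumberField.one_le_prod_norm_algHom_of_isIntegral {K : Type*} [Field K] [NumberField K]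
    {x : K} (hx : IsIntegral ℤ x) (hx0 : x ≠ 0) : 1 ≤ ∏ σ : K →ₐ[ℚ] ℂ, ‖σ x‖ := by
  let y : NumberField.RingOfIntegers K := ⟨x, hx⟩
  have hy0 : y ≠ 0 := fun h => hx0 (congrArg Subtype.val h)
  calc (1 : ℝ) ≤ |(Algebra.norm ℤ y : ℝ)| :=
        mod_cast Int.one_le_abs (Algebra.norm_ne_zero_iff.mpr hy0)
    _ = ‖algebraMap ℚ ℂ (Algebra.norm ℚ x)‖ := by
      rw [eq_ratCast, Complex.norm_ratCast, ← Rat.cast_intCast, Algebra.coe_norm_int]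
      rfl
    _ = ∏ σ : K →ₐ[ℚ] ℂ, ‖σ x‖ := by rw [Algebra.norm_eq_prod_embeddings, norm_prod]

theorem norm_sum_intCast_mul_pow_le {ι : Type*} [Fintype ι] {z : ℂ} (hz : ‖z‖ < 1) {e : ι → ℕ}
    (he : Function.Injective e) {d : ι → ℤ} {B : ℕ} (hd : ∀ i, |d i| ≤ B) :
    ‖∑ i, (d i : ℂ) * z ^ e i‖ ≤ B * (1 - ‖z‖)⁻¹ := by
  classical
  have hr : 0 ≤ ‖z‖ := norm_nonneg z
  calc ‖∑ i, (d i : ℂ) * z ^ e i‖ ≤ ∑ i, (B : ℝ) * ‖z‖ ^ e i := by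
        refine (norm_sum_le _ _).trans (sum_le_sum fun i _ => ?_)
        rw [norm_mul, norm_pow, Complex.norm_intCast]
        gcongr
        exact_mod_cast hd i
    _ = B * ∑ m ∈ univ.image e, ‖z‖ ^ m := by rw [sum_image he.injOn, mul_sum]
    _ ≤ B * ∑' m, ‖z‖ ^ m := by
        gcongr
        exact (summable_geometric_of_lt_one hr hz).sum_le_tsum _ fun m _ => pow_nonneg hr m
    _ = B * (1 - ‖z‖)⁻¹ := by rw [tsum_geometric_of_lt_one hr hz]

noncomputable abbrev ofRealAlgHom (α : ℝ) : ℚ⟮α⟯ →ₐ[ℚ] ℂ :=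
  (Complex.ofRealAm.restrictScalars ℚ).comp (IntermediateField.val _)

theorem algHom_adjoinSimple_gen_ne {α : ℝ} (hα : IsIntegral ℚ α) {σ : ℚ⟮α⟯ →ₐ[ℚ] ℂ}
    (hσ : σ ≠ ofRealAlgHom α) :
    σ (AdjoinSimple.gen ℚ α) ≠ α := fun h =>
  hσ <| (adjoin.powerBasis hα).algHom_ext <| by
    rw [adjoin.powerBasis_gen]
    exact h

theorem aeval_algHom_adjoinSimple_gen_minpoly {α : ℝ} (hα : IsIntegral ℤ α) (σ : ℚ⟮α⟯ →ₐ[ℚ] ℂ) :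
    aeval (σ (AdjoinSimple.gen ℚ α)) (minpoly ℤ α) = 0 := by
  have hmin : minpoly ℚ α = (minpoly ℤ α).map (algebraMap ℤ ℚ) :=
    minpoly.isIntegrallyClosed_eq_field_fractions' ℚ hα
  rw [← aeval_map_algebraMap ℚ, ← hmin, ← minpoly_gen, aeval_algHom_apply]
  exact (congrArg σ (minpoly.aeval ℚ _)).trans (map_zero σ)

namespace IsPVNumber

variable {α : ℝ}

theorem norm_algHom_adjoinSimple_gen_lt_one (hα : IsPVNumber α) {σ : ℚ⟮α⟯ →ₐ[ℚ] ℂ}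
    (hσ : σ ≠ ofRealAlgHom α) : ‖σ (AdjoinSimple.gen ℚ α)‖ < 1 :=
  hα.2.2 _ (aeval_algHom_adjoinSimple_gen_minpoly hα.2.1 σ)
    (algHom_adjoinSimple_gen_ne hα.2.1.tower_top hσ)

theorem exists_pos_le_abs_sum_intCast_mul_pow (hα : IsPVNumber α) (B : ℕ) :
    ∃ c > 0, ∀ {ι : Type*} [Fintype ι] (e : ι → ℕ), Function.Injective e → ∀ d : ι → ℤ,
      (∀ i, |d i| ≤ B) → ∑ i, (d i : ℝ) * α ^ e i ≠ 0 → c ≤ |∑ i, (d i : ℝ) * α ^ e i| := by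
  classical
  have := adjoin.finiteDimensional (hα.2.1.tower_top (A := ℚ))
  have : NumberField ℚ⟮α⟯ := ⟨⟩
  set a := AdjoinSimple.gen ℚ α
  set σ₀ := ofRealAlgHom α
  set C : ℝ := ∏ σ ∈ univ.erase σ₀, B * (1 - ‖σ a‖)⁻¹
  refine ⟨(max C 1)⁻¹, by positivity, fun e he d hd hS => ?_⟩
  set S := ∑ i, (d i : ℝ) * α ^ e i
  set x : ℚ⟮α⟯ := ∑ i, (d i : ℚ⟮α⟯) * a ^ e i
  have hσx (σ : ℚ⟮α⟯ →ₐ[ℚ] ℂ) : σ x = ∑ i, (d i : ℂ) * σ a ^ e i := by simp [x]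
  have hσ₀x : σ₀ x = S := by
    rw [hσx]
    push_cast [S]
    rfl
  have ha : IsIntegral ℤ a := by
    rw [← isIntegral_algebraMap_iff (R := ℤ) (algebraMap ℚ⟮α⟯ ℝ).injective,
      AdjoinSimple.algebraMap_gen]
    exact hα.2.1
  have hx : IsIntegral ℤ x := IsIntegral.sum _ fun _ _ => isIntegral_algebraMap.mul (ha.pow _)
  have hx0 : x ≠ 0 := by
    intro h
    have : (S : ℂ) = 0 := by rw [← hσ₀x, h, map_zero]
    exact hS (mod_cast this)
  have hbound : ∏ σ ∈ univ.erase σ₀, ‖σ x‖ ≤ C := by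
    refine prod_le_prod (fun σ _ => norm_nonneg _) fun σ hσ => ?_
    rw [hσx]
    exact norm_sum_intCast_mul_pow_le
      (hα.norm_algHom_adjoinSimple_gen_lt_one (ne_of_mem_erase hσ)) he hd
  have hone : 1 ≤ |S| * max C 1 := calc
    1 ≤ ∏ σ : ℚ⟮α⟯ →ₐ[ℚ] ℂ, ‖σ x‖ := NumberField.one_le_prod_norm_algHom_of_isIntegral hx hx0
    _ = ‖σ₀ x‖ * ∏ σ ∈ univ.erase σ₀, ‖σ x‖ := (mul_prod_erase _ _ (mem_univ σ₀)).symm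
    _ ≤ |S| * max C 1 := by
      rw [hσ₀x, Complex.norm_real, Real.norm_eq_abs]
      gcongr
      exact hbound.trans (le_max_left C 1)
  exact (inv_le_iff_one_le_mul₀ (by positivity)).mpr hone

end IsPVNumber

theorem Fin.sum_mul_pow_eq_pow_mul_sum_mul_inv_pow_rev {K : Type*} [Field K] {n : ℕ}
    (f : Fin n → K) {β : K} (hβ : β ≠ 0) :
    ∑ k, f k * β ^ (k : ℕ) = β ^ (n - 1) * ∑ k, f k * β⁻¹ ^ (k.rev : ℕ) := by
  rw [mul_sum]
  refine sum_congr rfl fun k _ => ?_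
  have hk : n - 1 = k + k.rev := by rw [Fin.val_rev]; omega
  rw [hk, pow_add, inv_pow, mul_left_comm, mul_assoc, mul_inv_cancel₀ (pow_ne_zero _ hβ), mul_one]

theorem exists_intCast_eq_sub_of_sign {x y : ℝ} (hx : x = 1 ∨ x = -1) (hy : y = 1 ∨ y = -1) :
    ∃ m : ℤ, |m| ≤ 2 ∧ (m : ℝ) = x - y := by
  rcases hx with rfl | rfl <;> rcases hy with rfl | rfl
  exacts [⟨0, by norm_num⟩, ⟨2, by norm_num⟩, ⟨-2, by norm_num⟩, ⟨0, by norm_num⟩]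

theorem separation_of_signed_beta_sums_general (β : ℝ)
    (hPV : IsPVNumber (1 / β)) :
    ∃ c : ℝ, 0 < c ∧ ∀ n : ℕ, 1 ≤ n → ∀ ε ε' : Fin n → ℝ,
      (∀ k, ε k = 1 ∨ ε k = -1) → (∀ k, ε' k = 1 ∨ ε' k = -1) →
      (∑ k, ε k * β ^ (k : ℕ)) ≠ (∑ k, ε' k * β ^ (k : ℕ)) →
      c * β ^ n ≤ |(∑ k, ε k * β ^ (k : ℕ)) - (∑ k, ε' k * β ^ (k : ℕ))| := by
  have hβ : 0 < β := one_div_pos.mp (one_pos.trans hPV.1)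
  have hβ1 : β ≤ 1 := ((one_lt_div hβ).mp hPV.1).le
  obtain ⟨c, hc, hsep⟩ := hPV.exists_pos_le_abs_sum_intCast_mul_pow 2
  refine ⟨c, hc, fun n _ ε ε' hε hε' hne => ?_⟩
  choose d hd2 hd using fun k => exists_intCast_eq_sub_of_sign (hε k) (hε' k)
  have hdiff : (∑ k, ε k * β ^ (k : ℕ)) - (∑ k, ε' k * β ^ (k : ℕ))
      = β ^ (n - 1) * ∑ k, (d k : ℝ) * (1 / β) ^ (k.rev : ℕ) := by
    rw [← sum_sub_distrib, one_div, ← Fin.sum_mul_pow_eq_pow_mul_sum_mul_inv_pow_rev _ hβ.ne']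
    simp only [hd, sub_mul]
  have hS : ∑ k, (d k : ℝ) * (1 / β) ^ (k.rev : ℕ) ≠ 0 := by
    intro h
    rw [h, mul_zero, sub_eq_zero] at hdiff
    exact hne hdiff
  calc c * β ^ n ≤ β ^ (n - 1) * c := by
        rw [mul_comm]
        exact mul_le_mul_of_nonneg_right (pow_le_pow_of_le_one hβ.le hβ1 (Nat.sub_le n 1)) hc.le
    _ ≤ |(∑ k, ε k * β ^ (k : ℕ)) - (∑ k, ε' k * β ^ (k : ℕ))| := by
        rw [hdiff, abs_mul, abs_of_pos (pow_pos hβ _)]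
        gcongr
        exact hsep _ (Fin.val_injective.comp Fin.rev_injective) d (fun k => mod_cast hd2 k) hS

theorem separation_of_signed_beta_sums (β : ℝ) (hβ : β ∈ Set.Ioo (1/2 : ℝ) 1)
    (hPV : IsPVNumber (1 / β)) :
    ∃ c : ℝ, 0 < c ∧ ∀ n : ℕ, 1 ≤ n → ∀ ε ε' : Fin n → ℝ,
      (∀ k, ε k = 1 ∨ ε k = -1) → (∀ k, ε' k = 1 ∨ ε' k = -1) →
      (∑ k, ε k * β ^ (k : ℕ)) ≠ (∑ k, ε' k * β ^ (k : ℕ)) →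
      c * β ^ n ≤ |(∑ k, ε k * β ^ (k : ℕ)) - (∑ k, ε' k * β ^ (k : ℕ))| :=
  separation_of_signed_beta_sums_general β hPV
end

section
/- Let β ∈ (1/2, 1) be the reciprocal of a PV number and p ∈ (0,1). Then the Fourier transform of the Bernoulli convolution b^p_β does not tend to zero as ω → ∞: there exists Ĉ > 0 and a sequence ω_k → ∞ with |φ(b^p_β, ω_k)| ≥ Ĉ. Consequently b^p_β is not absolutely continuous with respect to Lebesgue measure. -/
/-!
Write `α = 1 / β`. The Fourier transform of `b^p_β` at `ω` is the infinite product
`∏ₖ φ(ω (1 - β) βᵏ)` of characteristic functions of signs, and at `ω_j = 2π αʲ / (1 - β)` its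
`k`-th factor is `φ(2π α^(j - k))`. Because `α` is a PV number, `α^n` lies within `D θⁿ` of an
integer for `n ≥ 0` (the other conjugates contribute only `O(θⁿ)` to the integral trace of `αⁿ`),
while `α^n = β^|n|` is small for `n < 0`; so `1 - |φ(2π αⁿ)| ≤ sin²(2π αⁿ)` is summable over
`n ∈ ℤ`. No factor vanishes, since `αⁿ` is irrational for `n ≠ 0`: a rational power would be an
integer `m`, and a conjugate `z` of modulus `< 1` would give `zⁿ = m`, so `m = 0`. Hence every
finite subproduct is bounded below by one constant `C > 0`, so `|φ(ω_j)| ≥ C` for all `j`, and the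
Riemann–Lebesgue lemma rules out absolute continuity.
-/
open MeasureTheory

noncomputable def piBeta (β : ℝ) (i : ℕ → Bool) : ℝ :=
  (1 - β) * ∑' k : ℕ, (if i k then (1 : ℝ) else -1) * β ^ k

open Filter Topology

section PVNumber

open Polynomial IntermediateField NNReal

theorem IsIntegral.exists_int_eq_of_eq_ratCast {x : ℝ} (hx : IsIntegral ℤ x) {q : ℚ}
    (hq : x = q) : ∃ m : ℤ, x = m := by
  have hq' : IsIntegral ℤ q := by
    rw [hq, ← eq_ratCast (algebraMap ℚ ℝ)] at hx
    exact (isIntegral_algebraMap_iff (algebraMap ℚ ℝ).injective).mp hx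
  obtain ⟨m, hm⟩ := IsIntegrallyClosed.isIntegral_iff.mp hq'
  exact ⟨m, by rw [hq, ← hm, eq_intCast, Rat.cast_intCast]⟩

theorem IsIntegral.exists_aeval_minpoly_eq_zero_ne {x : ℝ} (hx : IsIntegral ℤ x)
    (hirr : Irrational x) : ∃ z : ℂ, aeval z (minpoly ℤ x) = 0 ∧ z ≠ x := by
  have hxQ : IsIntegral ℚ x := hx.tower_top
  have hdeg : 1 < (minpoly ℚ x).natDegree := by
    refine lt_of_le_of_ne (minpoly.natDegree_pos hxQ) fun h => hirr ?_
    exact minpoly.natDegree_eq_one_iff.mp h.symm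
  have hcard : 1 < ((minpoly ℚ x).rootSet ℂ).toFinset.card := by
    rwa [Set.toFinset_card,
      card_rootSet_eq_natDegree (minpoly.irreducible hxQ).separable (IsAlgClosed.splits _)]
  obtain ⟨z, hz, hzx⟩ := (Finset.one_lt_card_iff_nontrivial.mp hcard).exists_ne (x : ℂ)
  rw [Set.mem_toFinset, mem_rootSet, minpoly.isIntegrallyClosed_eq_field_fractions' ℚ hx,
    aeval_map_algebraMap] at hz
  exact ⟨z, hz.2, hzx⟩

theorem exists_int_eq_sum_algHom_pow {K : Type*} [Field K] [Algebra ℚ K]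
    [FiniteDimensional ℚ K] {x : K} (hx : IsIntegral ℤ x) (m : ℕ) :
    ∃ z : ℤ, (z : ℂ) = ∑ σ : K →ₐ[ℚ] ℂ, σ x ^ m := by
  obtain ⟨z, hz⟩ :=
    IsIntegrallyClosed.isIntegral_iff.mp (Algebra.isIntegral_trace (L := ℚ) (hx.pow m))
  refine ⟨z, ?_⟩
  simp_rw [← map_pow, ← trace_eq_sum_embeddings (E := ℂ), ← hz,
    ← IsScalarTower.algebraMap_apply, eq_intCast]

theorem IsPVNumber.irrational_of_lt_two {α : ℝ} (hα : IsPVNumber α) (h2 : α < 2) :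
    Irrational α := by
  rintro ⟨q, hq⟩
  obtain ⟨m, hm⟩ := hα.2.1.exists_int_eq_of_eq_ratCast hq.symm
  have hm1 : (1 : ℤ) < m := by exact_mod_cast hm ▸ hα.1
  have hm2 : m < 2 := by exact_mod_cast hm ▸ h2
  omega

theorem IsPVNumber.irrational_pow {α : ℝ} (hα : IsPVNumber α) (hirr : Irrational α) {n : ℕ}
    (hn : n ≠ 0) : Irrational (α ^ n) := by
  obtain ⟨hα1, hint, hconj⟩ := hα
  rintro ⟨q, hq⟩
  obtain ⟨m, hm⟩ := (hint.pow n).exists_int_eq_of_eq_ratCast hq.symm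
  obtain ⟨z, hz, hzα⟩ := hint.exists_aeval_minpoly_eq_zero_ne hirr
  have hdvd : minpoly ℤ α ∣ X ^ n - C m :=
    minpoly.isIntegrallyClosed_dvd hint (by simp [hm])
  have hzm : z ^ n = m := by
    obtain ⟨c, hc⟩ := hdvd
    have := congrArg (aeval z) hc
    simp only [map_sub, map_pow, aeval_X, aeval_C, map_mul, hz, zero_mul] at this
    simpa [sub_eq_zero] using this
  have hm1 : |m| < 1 := by
    have := pow_lt_one₀ (norm_nonneg z) (hconj z hz hzα) hn
    rw [← norm_pow, hzm, Complex.norm_intCast] at this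
    exact_mod_cast this
  have hαn : (0 : ℝ) < α ^ n := pow_pos (by linarith) n
  rw [hm, Int.cast_pos] at hαn
  exact absurd hm1 (by rw [abs_of_pos hαn]; omega)

theorem IsPVNumber.irrational_zpow {α : ℝ} (hα : IsPVNumber α) (hirr : Irrational α) {n : ℤ}
    (hn : n ≠ 0) : Irrational (α ^ n) := by
  obtain ⟨m, rfl | rfl⟩ := Int.eq_nat_or_neg n
  · rw [zpow_natCast]
    exact hα.irrational_pow hirr (by exact_mod_cast hn)
  · rw [zpow_neg, zpow_natCast]
    exact (hα.irrational_pow hirr (by simpa using hn)).inv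

theorem IsPVNumber.exists_int_near_pow {α : ℝ} (hα : IsPVNumber α) :
    ∃ D θ : ℝ, 0 ≤ θ ∧ θ < 1 ∧ ∀ m : ℕ, ∃ z : ℤ, |α ^ m - z| ≤ D * θ ^ m := by
  obtain ⟨-, hint, hconj⟩ := hα
  have : FiniteDimensional ℚ ℚ⟮α⟯ := adjoin.finiteDimensional hint.tower_top
  set g := AdjoinSimple.gen ℚ α
  have hg : algebraMap ℚ⟮α⟯ ℝ g = α := AdjoinSimple.algebraMap_gen ℚ α
  have hgint : IsIntegral ℤ g := by
    rwa [← isIntegral_algebraMap_iff (algebraMap ℚ⟮α⟯ ℝ).injective, hg]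
  let σ₀ : ℚ⟮α⟯ →ₐ[ℚ] ℂ := (Complex.ofRealAm.restrictScalars ℚ).comp (val _)
  have hσ₀ : σ₀ g = α := rfl
  have hroot (σ : ℚ⟮α⟯ →ₐ[ℚ] ℂ) : aeval (σ g) (minpoly ℤ α) = 0 := by
    have hg0 : aeval g (minpoly ℤ α) = 0 := by
      apply (algebraMap ℚ⟮α⟯ ℝ).injective
      rw [← aeval_algebraMap_apply, hg, minpoly.aeval, map_zero]
    have := aeval_algHom_apply (σ.restrictScalars ℤ) g (minpoly ℤ α)
    rwa [hg0, map_zero] at this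
  have hlt (σ : ℚ⟮α⟯ →ₐ[ℚ] ℂ) (hσ : σ ≠ σ₀) : ‖σ g‖ < 1 :=
    hconj _ (hroot σ) fun h => hσ <| (adjoin.powerBasis hint.tower_top).algHom_ext <| by
      rw [adjoin.powerBasis_gen]
      exact h
  classical
  set S := Finset.univ.erase σ₀
  set θ : ℝ≥0 := S.sup fun σ => ‖σ g‖₊
  have hθ : θ < 1 :=
    (Finset.sup_lt_iff zero_lt_one).mpr fun σ hσ => hlt σ (Finset.ne_of_mem_erase hσ)
  refine ⟨S.card, θ, θ.2, hθ, fun m => ?_⟩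
  -- `z` is the trace of `g ^ m`: the power sum of `α` and its conjugates
  obtain ⟨z, hz⟩ := exists_int_eq_sum_algHom_pow hgint m
  refine ⟨z, ?_⟩
  have hsplit : ((α ^ m - z : ℝ) : ℂ) = -∑ σ ∈ S, σ g ^ m := by
    push_cast
    rw [hz, ← Finset.add_sum_erase _ _ (Finset.mem_univ σ₀), hσ₀]
    ring
  calc |α ^ m - z| = ‖∑ σ ∈ S, σ g ^ m‖ := by
        rw [← norm_neg, ← hsplit, Complex.norm_real, Real.norm_eq_abs]
    _ ≤ ∑ σ ∈ S, (θ : ℝ) ^ m := by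
        refine norm_sum_le_of_le _ fun σ hσ => ?_
        rw [norm_pow]
        exact pow_le_pow_left₀ (norm_nonneg _) (Finset.le_sup (f := fun σ => ‖σ g‖₊) hσ) m
    _ = S.card * θ ^ m := by rw [Finset.sum_const, nsmul_eq_mul]

theorem IsPVNumber.exists_int_near_zpow {α : ℝ} (hα : IsPVNumber α) :
    ∃ D r : ℝ, 0 ≤ r ∧ r < 1 ∧ ∀ n : ℤ, ∃ z : ℤ, |α ^ n - z| ≤ D * r ^ n.natAbs := by
  obtain ⟨D, θ, hθ0, hθ1, hnear⟩ := hα.exists_int_near_pow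
  have hα0 : 0 < α := by linarith [hα.1]
  have hr0 : 0 ≤ max θ α⁻¹ := le_max_of_le_left hθ0
  refine ⟨max D 1, max θ α⁻¹, hr0, max_lt hθ1 (inv_lt_one_of_one_lt₀ hα.1), fun n => ?_⟩
  obtain ⟨m, rfl | rfl⟩ := Int.eq_nat_or_neg n
  · obtain ⟨z, hz⟩ := hnear m
    refine ⟨z, ?_⟩
    rw [zpow_natCast, Int.natAbs_natCast]
    exact hz.trans (mul_le_mul (le_max_left _ _) (pow_le_pow_left₀ hθ0 (le_max_left _ _) m)
      (pow_nonneg hθ0 m) (le_max_of_le_right zero_le_one))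
  · refine ⟨0, ?_⟩
    rw [Int.natAbs_neg, Int.natAbs_natCast, zpow_neg, zpow_natCast, Int.cast_zero, sub_zero,
      ← inv_pow, abs_of_pos (by positivity)]
    calc α⁻¹ ^ m ≤ max θ α⁻¹ ^ m := pow_le_pow_left₀ (by positivity) (le_max_right _ _) m
      _ ≤ max D 1 * max θ α⁻¹ ^ m := le_mul_of_one_le_left (pow_nonneg hr0 m) (le_max_right _ _)

end PVNumber

section Estimates

open Real

theorem summable_pow_natAbs {r : ℝ} (h0 : 0 ≤ r) (h1 : r < 1) :
    Summable fun n : ℤ => r ^ n.natAbs :=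
  Summable.of_nat_of_neg (by simpa using summable_geometric_of_lt_one h0 h1)
    (by simpa using summable_geometric_of_lt_one h0 h1)

theorem abs_sin_two_pi_mul_le (x : ℝ) (z : ℤ) : |sin (2 * π * x)| ≤ 2 * π * |x - z| := by
  rw [← sin_sub_int_mul_two_pi _ z, show 2 * π * x - z * (2 * π) = 2 * π * (x - z) by ring]
  refine (abs_sin_le_abs).trans_eq ?_
  rw [abs_mul, abs_of_pos two_pi_pos]

theorem Irrational.cos_two_pi_mul_ne_zero {x : ℝ} (hx : Irrational x) :
    cos (2 * π * x) ≠ 0 := by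
  refine cos_ne_zero_iff.mpr fun k hk => hx ⟨(2 * k + 1) / 4, ?_⟩
  have : x = (2 * k + 1) / 4 := by
    field_simp at hk
    linarith
  rw [this]
  push_cast
  ring

theorem Finset.one_sub_sum_le_prod_one_sub {ι : Type*} (s : Finset ι) {u : ι → ℝ}
    (h0 : ∀ i ∈ s, 0 ≤ u i) (h1 : ∀ i ∈ s, u i ≤ 1) :
    1 - ∑ i ∈ s, u i ≤ ∏ i ∈ s, (1 - u i) := by
  classical
  induction s using Finset.induction_on with
  | empty => simp
  | insert a s ha ih =>
    rw [Finset.sum_insert ha, Finset.prod_insert ha]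
    have ih := ih (fun i hi => h0 i (mem_insert_of_mem hi))
      (fun i hi => h1 i (mem_insert_of_mem hi))
    have hua := h0 a (mem_insert_self a s)
    have hsum : 0 ≤ ∑ i ∈ s, u i := sum_nonneg fun i hi => h0 i (mem_insert_of_mem hi)
    nlinarith [mul_le_mul_of_nonneg_left ih (sub_nonneg.mpr (h1 a (mem_insert_self a s)))]

theorem exists_pos_le_prod_of_summable_one_sub {ι : Type*} {f : ι → ℝ} (hpos : ∀ i, 0 < f i)
    (hle : ∀ i, f i ≤ 1) (hsum : Summable fun i => 1 - f i) :
    ∃ C, 0 < C ∧ ∀ s : Finset ι, C ≤ ∏ i ∈ s, f i := by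
  classical
  obtain ⟨T, hT⟩ :=
    summable_iff_vanishing.mp hsum (Set.Iio (1 / 2)) (Iio_mem_nhds (by norm_num))
  have hTpos : 0 < ∏ i ∈ T, f i := Finset.prod_pos fun i _ => hpos i
  refine ⟨(∏ i ∈ T, f i) / 2, by positivity, fun s => ?_⟩
  have hinter : ∏ i ∈ T, f i ≤ ∏ i ∈ s ∩ T, f i :=
    Finset.prod_le_prod_of_subset_of_le_one Finset.inter_subset_right (fun i _ => (hpos i).le)
      fun i _ _ => hle i
  have hdiff : 1 / 2 ≤ ∏ i ∈ s \ T, f i := by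
    have htail : ∑ i ∈ s \ T, (1 - f i) < 1 / 2 := hT _ Finset.sdiff_disjoint
    have := (s \ T).one_sub_sum_le_prod_one_sub (u := fun i => 1 - f i)
      (fun i _ => sub_nonneg.mpr (hle i)) (fun i _ => by linarith [hpos i])
    simp only [sub_sub_cancel] at this
    linarith
  rw [← Finset.prod_inter_mul_prod_sdiff s T]
  calc (∏ i ∈ T, f i) / 2 ≤ (∏ i ∈ s ∩ T, f i) * (1 / 2) := by linarith
    _ ≤ (∏ i ∈ s ∩ T, f i) * ∏ i ∈ s \ T, f i :=
      mul_le_mul_of_nonneg_left hdiff (Finset.prod_nonneg fun i _ => (hpos i).le)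

end Estimates

open Real Complex in
/-- The characteristic function `E[exp (i t X)]` of a sign `X` with `P(X = 1) = p`,
`P(X = -1) = 1 - p`. -/
noncomputable def signCharFun (p t : ℝ) : ℂ :=
  p * exp (t * I) + (1 - p) * exp (-(t * I))

section signCharFun

open Real

variable {p : ℝ}

theorem norm_signCharFun_sq (t : ℝ) :
    ‖signCharFun p t‖ ^ 2 = 1 - 4 * p * (1 - p) * sin t ^ 2 := by
  have h : signCharFun p t = (cos t : ℂ) + ((2 * p - 1) * sin t : ℝ) * Complex.I := by
    rw [signCharFun, ← neg_mul, ← Complex.ofReal_neg, Complex.exp_mul_I, Complex.exp_mul_I,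
      Complex.ofReal_neg, Complex.cos_neg, Complex.sin_neg, ← Complex.ofReal_cos,
      ← Complex.ofReal_sin]
    push_cast
    ring
  rw [h, Complex.norm_add_mul_I, Real.sq_sqrt (by positivity)]
  nlinarith [sin_sq_add_cos_sq t]

theorem norm_signCharFun_le_one (hp : p ∈ Set.Icc 0 1) (t : ℝ) : ‖signCharFun p t‖ ≤ 1 := by
  have : ‖signCharFun p t‖ ^ 2 ≤ 1 := by
    rw [norm_signCharFun_sq]
    nlinarith [hp.1, hp.2, sq_nonneg (sin t), mul_nonneg hp.1 (sub_nonneg.mpr hp.2)]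
  exact (sq_le_one_iff₀ (norm_nonneg _)).mp this

theorem one_sub_norm_signCharFun_le (hp : p ∈ Set.Icc 0 1) (t : ℝ) :
    1 - ‖signCharFun p t‖ ≤ sin t ^ 2 := by
  have h1 := norm_signCharFun_le_one hp t
  have := norm_signCharFun_sq (p := p) t
  nlinarith [norm_nonneg (signCharFun p t), sq_nonneg (2 * p - 1), sq_nonneg (sin t)]

theorem norm_signCharFun_pos {t : ℝ} (hcos : cos t ≠ 0) :
    0 < ‖signCharFun p t‖ := by
  have hsq : 0 < ‖signCharFun p t‖ ^ 2 := by
    rw [norm_signCharFun_sq]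
    nlinarith [sq_pos_of_ne_zero hcos, sin_sq_add_cos_sq t, sq_nonneg (2 * p - 1),
      sq_nonneg (sin t)]
  exact lt_of_pow_lt_pow_left₀ 2 (norm_nonneg _) (by simpa using hsq)

end signCharFun

open Real in
theorem IsPVNumber.exists_pos_le_prod_norm_signCharFun {α p : ℝ} (hα : IsPVNumber α)
    (hirr : Irrational α) (hp : p ∈ Set.Icc 0 1) :
    ∃ C, 0 < C ∧ ∀ s : Finset ℤ, C ≤ ∏ n ∈ s, ‖signCharFun p (2 * π * α ^ n)‖ := by
  refine exists_pos_le_prod_of_summable_one_sub (fun n => norm_signCharFun_pos ?_)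
    (fun n => norm_signCharFun_le_one hp _) ?_
  · rcases eq_or_ne n 0 with rfl | hn
    · simp
    · exact (hα.irrational_zpow hirr hn).cos_two_pi_mul_ne_zero
  obtain ⟨D, r, hr0, hr1, hnear⟩ := hα.exists_int_near_zpow
  refine Summable.of_nonneg_of_le (fun n => sub_nonneg.mpr (norm_signCharFun_le_one hp _))
    (fun n => ?_) ((summable_pow_natAbs (sq_nonneg r) (by nlinarith)).mul_left ((2 * π * D) ^ 2))
  obtain ⟨z, hz⟩ := hnear n
  calc 1 - ‖signCharFun p (2 * π * α ^ n)‖ ≤ |sin (2 * π * α ^ n)| ^ 2 := by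
        rw [sq_abs]; exact one_sub_norm_signCharFun_le hp _
    _ ≤ (2 * π * (D * r ^ n.natAbs)) ^ 2 := by
        refine pow_le_pow_left₀ (abs_nonneg _) ((abs_sin_two_pi_mul_le _ z).trans ?_) 2
        gcongr
    _ = (2 * π * D) ^ 2 * (r ^ 2) ^ n.natAbs := by ring

open Complex in
theorem tendsto_integral_exp_mul_of_absolutelyContinuous {ν : Measure ℝ} [SigmaFinite ν]
    (hν : ν ≪ volume) : Tendsto (fun ω : ℝ => ∫ x, exp (I * (ω * x)) ∂ν) atTop (𝓝 0) := by
  have hw : Tendsto (fun ω : ℝ => -(ω / (2 * Real.pi))) atTop (cocompact ℝ) :=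
    (tendsto_neg_atTop_atBot.comp (tendsto_id.atTop_div_const Real.two_pi_pos)).mono_right
      atBot_le_cocompact
  refine ((Real.tendsto_integral_exp_smul_cocompact
    fun x => ((ν.rnDeriv volume x).toReal : ℂ)).comp hw).congr fun ω => ?_
  rw [← integral_rnDeriv_smul hν]
  refine integral_congr_ae (Eventually.of_forall fun x => ?_)
  simp only [Circle.smul_def, Real.fourierChar_apply, Complex.real_smul, smul_eq_mul]
  rw [show 2 * Real.pi * -(x * -(ω / (2 * Real.pi))) = ω * x by field_simp]
  push_cast
  ring_nf

def IsBernoulliMeasure (p : ℝ) (μ : Measure (ℕ → Bool)) : Prop :=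
  ∀ n : ℕ, ∀ f : Fin n → Bool,
    μ {x | ∀ k : Fin n, x (k : ℕ) = f k} = ENNReal.ofReal (∏ k, if f k then p else 1 - p)

section BernoulliConvolution

open Finset

variable {β p : ℝ}

theorem summable_sign_mul_pow (hβ : |β| < 1) (x : ℕ → Bool) :
    Summable fun k => (if x k then (1 : ℝ) else -1) * β ^ k :=
  Summable.of_norm_bounded (summable_geometric_of_lt_one (abs_nonneg β) hβ) fun k => by
    cases x k <;> simp

theorem measurable_sum_sign_mul_pow (n : ℕ) :
    Measurable fun x : ℕ → Bool => ∑ k ∈ range n, (if x k then (1 : ℝ) else -1) * β ^ k :=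
  Finset.measurable_sum _ fun k _ =>
    (measurable_of_countable fun b : Bool => (if b then (1 : ℝ) else -1) * β ^ k).comp
      (measurable_pi_apply k)

theorem measurable_piBeta (hβ : |β| < 1) : Measurable (piBeta β) :=
  measurable_of_tendsto_metrizable (fun n => (measurable_sum_sign_mul_pow n).const_mul _)
    (tendsto_pi_nhds.mpr fun x =>
      ((summable_sign_mul_pow hβ x).hasSum.tendsto_sum_nat).const_mul (1 - β))

theorem IsBernoulliMeasure.integral_prod {μ : Measure (ℕ → Bool)} [IsProbabilityMeasure μ]
    (hμ : IsBernoulliMeasure p μ) (hp : p ∈ Set.Icc 0 1) (n : ℕ) (h : ℕ → Bool → ℂ) :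
    ∫ x, ∏ k ∈ range n, h k (x k) ∂μ
      = ∏ k ∈ range n, (p * h k true + (1 - p : ℝ) * h k false) := by
  classical
  let T : (ℕ → Bool) → (Fin n → Bool) := fun x k => x k
  have hT : Measurable T := measurable_pi_lambda _ fun k => measurable_pi_apply _
  have hsingleton (y : Fin n → Bool) :
      (μ.map T).real {y} = ∏ k, (if y k then p else 1 - p) := by
    rw [measureReal_def, Measure.map_apply hT (measurableSet_singleton y)]
    have hset : T ⁻¹' {y} = {x | ∀ k : Fin n, x (k : ℕ) = y k} := by
      ext x
      simp [T, funext_iff]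
    rw [hset, hμ n y, ENNReal.toReal_ofReal (prod_nonneg fun k _ => ?_)]
    split_ifs <;> linarith [hp.1, hp.2]
  calc ∫ x, ∏ k ∈ range n, h k (x k) ∂μ
      = ∫ y, ∏ k : Fin n, h k (y k) ∂(μ.map T) := by
        rw [integral_map hT.aemeasurable (measurable_of_countable _).aestronglyMeasurable]
        simp_rw [T, Fin.prod_univ_eq_prod_range (fun k => h k _) n]
    _ = ∑ y : Fin n → Bool, ∏ k, ((if y k then p else 1 - p : ℝ) : ℂ) * h k (y k) := by
        rw [integral_fintype .of_finite]
        refine sum_congr rfl fun y _ => ?_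
        rw [hsingleton y, Complex.real_smul, Complex.ofReal_prod, ← prod_mul_distrib]
    _ = ∏ k : Fin n, ∑ b : Bool, ((if b then p else 1 - p : ℝ) : ℂ) * h k b := by
        rw [prod_univ_sum, Fintype.piFinset_univ]
    _ = ∏ k : Fin n, (p * h k true + (1 - p : ℝ) * h k false) := by
        simp
    _ = ∏ k ∈ range n, (p * h k true + (1 - p : ℝ) * h k false) :=
        Fin.prod_univ_eq_prod_range (fun k => p * h k true + (1 - p : ℝ) * h k false) n

open Complex in
theorem IsBernoulliMeasure.tendsto_prod_signCharFun {μ : Measure (ℕ → Bool)}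
    [IsProbabilityMeasure μ] (hμ : IsBernoulliMeasure p μ) (hp : p ∈ Set.Icc 0 1)
    (hβ : |β| < 1) (ω : ℝ) :
    Tendsto (fun n => ∏ k ∈ range n, signCharFun p (ω * ((1 - β) * β ^ k))) atTop
      (𝓝 (∫ x, exp (I * (ω * x)) ∂(μ.map (piBeta β)))) := by
  rw [integral_map (measurable_piBeta hβ).aemeasurable (by fun_prop)]
  let S (n : ℕ) (x : ℕ → Bool) : ℝ :=
    (1 - β) * ∑ k ∈ range n, (if x k then (1 : ℝ) else -1) * β ^ k
  have hS (n : ℕ) : Measurable (S n) := (measurable_sum_sign_mul_pow n).const_mul _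
  have hprod (n : ℕ) : ∫ x, exp (I * (ω * S n x)) ∂μ
      = ∏ k ∈ range n, signCharFun p (ω * ((1 - β) * β ^ k)) := by
    let e (k : ℕ) (b : Bool) : ℂ :=
      exp (((ω * ((1 - β) * β ^ k) : ℝ) : ℂ) * I * if b then 1 else -1)
    have hexp (x : ℕ → Bool) : exp (I * (ω * S n x)) = ∏ k ∈ range n, e k (x k) := by
      rw [← exp_sum]
      congr 1
      simp only [S, ofReal_mul, ofReal_sum, mul_sum]
      refine sum_congr rfl fun k _ => ?_
      cases x k <;> simp <;> ring
    rw [integral_congr_ae (Eventually.of_forall hexp), hμ.integral_prod hp n e]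
    refine prod_congr rfl fun k _ => ?_
    simp [e, signCharFun]
  refine (tendsto_integral_of_dominated_convergence (fun _ => 1)
    (fun n => (by fun_prop : Measurable fun x => exp (I * (ω * S n x))).aestronglyMeasurable)
    (integrable_const 1) (fun n => Eventually.of_forall fun x => ?_)
    (Eventually.of_forall fun x => ?_)).congr hprod
  · rw [← ofReal_mul, norm_exp_I_mul_ofReal]
  · exact ((by fun_prop : Continuous fun s : ℝ => exp (I * (ω * s))).tendsto _).comp
      (((summable_sign_mul_pow hβ x).hasSum.tendsto_sum_nat).const_mul (1 - β))

open Real Complex in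
theorem IsBernoulliMeasure.exists_pos_le_norm_integral_exp_piBeta
    {μ : Measure (ℕ → Bool)} [IsProbabilityMeasure μ] (hμ : IsBernoulliMeasure p μ)
    (hp : p ∈ Set.Icc 0 1) (hβ : β ∈ Set.Ioo 0 1) (hPV : IsPVNumber (1 / β))
    (hirr : Irrational (1 / β)) :
    ∃ C, 0 < C ∧ ∀ j : ℕ,
      C ≤ ‖∫ x, exp (I * ((2 * π * (1 / β) ^ j / (1 - β) : ℝ) * x)) ∂(μ.map (piBeta β))‖ := by
  obtain ⟨C, hC, hprod⟩ := hPV.exists_pos_le_prod_norm_signCharFun hirr hp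
  refine ⟨C, hC, fun j => ge_of_tendsto
    (hμ.tendsto_prod_signCharFun hp (abs_lt.mpr ⟨by linarith [hβ.1], hβ.2⟩) _).norm
    (Eventually.of_forall fun N => ?_)⟩
  have harg (k : ℕ) : 2 * π * (1 / β) ^ j / (1 - β) * ((1 - β) * β ^ k)
      = 2 * π * (1 / β) ^ ((j : ℤ) - k) := by
    have := hβ.1.ne'
    have := (sub_pos.mpr hβ.2).ne'
    rw [zpow_sub₀ (by positivity), zpow_natCast, zpow_natCast, one_div, inv_pow, inv_pow]
    field_simp
  rw [norm_prod]
  simp_rw [harg]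
  rw [← prod_image (f := fun n : ℤ => ‖signCharFun p (2 * π * (1 / β) ^ n)‖)
    fun a _ b _ h => by simpa using h]
  exact hprod _

end BernoulliConvolution

theorem fourier_not_vanishing_and_not_ac (β p : ℝ) (hβ : β ∈ Set.Ioo (1/2 : ℝ) 1)
    (hp : p ∈ Set.Ioo (0 : ℝ) 1) (hPV : IsPVNumber (1 / β))
    (μ : Measure (ℕ → Bool)) [IsProbabilityMeasure μ]
    (hiid : ∀ n : ℕ, ∀ f : Fin n → Bool,
      μ {x | ∀ k : Fin n, x (k : ℕ) = f k}
        = ENNReal.ofReal (∏ k, if f k then p else 1 - p)) :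
    (∃ C : ℝ, 0 < C ∧ ∃ ω : ℕ → ℝ, Filter.Tendsto ω Filter.atTop Filter.atTop ∧
      ∀ k, C ≤ ‖∫ x, Complex.exp (Complex.I * (ω k * x)) ∂(μ.map (piBeta β))‖) ∧
    ¬ (μ.map (piBeta β)) ≪ (volume : Measure ℝ) := by
  have hβ0 : 0 < β := by linarith [hβ.1]
  have hirr : Irrational (1 / β) :=
    hPV.irrational_of_lt_two (by rw [div_lt_iff₀ hβ0]; linarith [hβ.1])
  obtain ⟨C, hC, hle⟩ := IsBernoulliMeasure.exists_pos_le_norm_integral_exp_piBeta hiid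
    (Set.Ioo_subset_Icc_self hp) ⟨hβ0, hβ.2⟩ hPV hirr
  have hω : Tendsto (fun j : ℕ => 2 * Real.pi * (1 / β) ^ j / (1 - β)) atTop atTop :=
    ((tendsto_pow_atTop_atTop_of_one_lt hPV.1).const_mul_atTop Real.two_pi_pos).atTop_div_const
      (by linarith [hβ.2])
  refine ⟨⟨C, hC, _, hω, hle⟩, fun hac => ?_⟩
  have : IsProbabilityMeasure (μ.map (piBeta β)) := Measure.isProbabilityMeasure_map
    (measurable_piBeta (abs_lt.mpr ⟨by linarith, hβ.2⟩)).aemeasurable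
  obtain ⟨j, hj⟩ := (((tendsto_integral_exp_mul_of_absolutelyContinuous hac).comp
    hω).norm.eventually (gt_mem_nhds (by rwa [norm_zero]))).exists
  exact (hle j).not_gt hj
end

section
/- Let c > 0, 0 < γ < 1 (playing the role of γ = log β / log τ ∈ (0,1)). Suppose a finite family Π of classes P with sizes ♯P ≥ 1 satisfies: Σ_{P∈Π} ♯P = 2^n, |Π| ≤ c β^{-n}, and there is a subfamily Π̂ ⊆ Π with |Π̂| ≤ ε c β^{-n} and Σ_{P∈Π̂} ♯P ≥ C 2^n. Then Σ_{P∈Π} (♯P)^γ ≤ β^{n(γ−1)} 2^{nγ} ((εc)^{1−γ} + c^{1−γ}(1−C)^γ). -/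
/-
Split `Π` into `Π̂` and its complement and apply, on each part, the concave power-mean bound
`∑ aᵢ ^ γ ≤ N ^ (1 - γ) (∑ aᵢ) ^ γ` for `N` terms (Hölder with exponent `1 / γ`): on `Π̂` there are
at most `ε c β⁻ⁿ` classes of total size at most `2ⁿ`, on the complement at most `c β⁻ⁿ` classes of
total size at most `(1 - C) 2ⁿ`.
-/

open Finset

namespace Real

variable {ι : Type*} {γ : ℝ}

theorem sum_rpow_le_card_rpow_mul_sum_rpow (s : Finset ι) {a : ι → ℝ} (ha : ∀ i, 0 ≤ a i)
    (hγ₀ : 0 < γ) (hγ₁ : γ ≤ 1) :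
    ∑ i ∈ s, a i ^ γ ≤ (#s : ℝ) ^ (1 - γ) * (∑ i ∈ s, a i) ^ γ := by
  have hp : 1 ≤ γ⁻¹ := one_le_inv₀ hγ₀ |>.mpr hγ₁
  have holder := inner_le_weight_mul_Lp_of_nonneg s hp (fun _ ↦ 1) (fun i ↦ a i ^ γ)
    (fun _ ↦ zero_le_one) (fun i ↦ rpow_nonneg (ha i) γ)
  have hpow : ∀ i, (a i ^ γ) ^ γ⁻¹ = a i := fun i ↦ by
    rw [← rpow_mul (ha i), mul_inv_cancel₀ hγ₀.ne', rpow_one]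
  simpa only [one_mul, inv_inv, sum_const, nsmul_eq_mul, mul_one, hpow] using holder

theorem sum_rpow_le_of_card_le_of_sum_le (s : Finset ι) {a : ι → ℝ} (ha : ∀ i, 0 ≤ a i)
    (hγ₀ : 0 < γ) (hγ₁ : γ ≤ 1) {N M : ℝ} (hN : (#s : ℝ) ≤ N) (hM : ∑ i ∈ s, a i ≤ M) :
    ∑ i ∈ s, a i ^ γ ≤ N ^ (1 - γ) * M ^ γ :=
  calc ∑ i ∈ s, a i ^ γ ≤ (#s : ℝ) ^ (1 - γ) * (∑ i ∈ s, a i) ^ γ :=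
        sum_rpow_le_card_rpow_mul_sum_rpow s ha hγ₀ hγ₁
    _ ≤ N ^ (1 - γ) * M ^ γ := by
        have hsum := sum_nonneg fun i (_ : i ∈ s) ↦ ha i
        exact mul_le_mul (rpow_le_rpow (Nat.cast_nonneg _) hN (by linarith))
          (rpow_le_rpow hsum hM hγ₀.le) (rpow_nonneg hsum γ)
          (rpow_nonneg ((Nat.cast_nonneg _).trans hN) _)

end Real

theorem combinatorial_power_sum_estimate_general {ι : Type*} [DecidableEq ι]
    (β c C ε γ : ℝ) (n : ℕ) (hβ : 0 < β)
    (hγ : γ ∈ Set.Ioo (0 : ℝ) 1) (hc : 0 < c) (hε : 0 < ε)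
    (hC : C ∈ Set.Ioo (0 : ℝ) 1)
    (Pa Pb : Finset ι) (s : ι → ℕ)
    (hsum : ∑ i ∈ Pa, s i = 2 ^ n)
    (hcard : (Pa.card : ℝ) ≤ c * (β ^ n)⁻¹)
    (hsub : Pb ⊆ Pa) (hcardb : (Pb.card : ℝ) ≤ ε * c * (β ^ n)⁻¹)
    (hmass : C * 2 ^ n ≤ (∑ i ∈ Pb, s i : ℝ)) :
    ∑ i ∈ Pa, (s i : ℝ) ^ γ
      ≤ (β ^ n) ^ (γ - 1) * ((2 : ℝ) ^ n) ^ γ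
          * ((ε * c) ^ (1 - γ) + c ^ (1 - γ) * (1 - C) ^ γ) := by
  have hs : ∀ i, (0 : ℝ) ≤ s i := fun i ↦ Nat.cast_nonneg _
  have hβn : 0 < β ^ n := pow_pos hβ n
  have hsumR : ∑ i ∈ Pa, (s i : ℝ) = 2 ^ n := by exact_mod_cast hsum
  have hsplit := sum_sdiff hsub (f := fun i ↦ (s i : ℝ))
  have hsplitγ := sum_sdiff hsub (f := fun i ↦ (s i : ℝ) ^ γ)
  have hmassb : ∑ i ∈ Pb, (s i : ℝ) ≤ 2 ^ n := by
    linarith [sum_nonneg fun i (_ : i ∈ Pa \ Pb) ↦ hs i]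
  have hcardd : (#(Pa \ Pb) : ℝ) ≤ c * (β ^ n)⁻¹ :=
    le_trans (by exact_mod_cast card_le_card sdiff_subset) hcard
  have hb := Real.sum_rpow_le_of_card_le_of_sum_le Pb hs hγ.1 hγ.2.le hcardb hmassb
  have hd := Real.sum_rpow_le_of_card_le_of_sum_le (Pa \ Pb) hs hγ.1 hγ.2.le hcardd
    (M := (1 - C) * 2 ^ n) (by linarith)
  have hscale : ∀ x : ℝ, 0 ≤ x → (x * (β ^ n)⁻¹) ^ (1 - γ) = x ^ (1 - γ) * (β ^ n) ^ (γ - 1) :=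
    fun x hx ↦ by
      rw [Real.mul_rpow hx (inv_nonneg.2 hβn.le), Real.inv_rpow hβn.le, ← Real.rpow_neg hβn.le,
        neg_sub]
  rw [hscale _ (by positivity)] at hb
  rw [hscale _ hc.le, Real.mul_rpow (sub_nonneg.2 hC.2.le) (by positivity)] at hd
  calc ∑ i ∈ Pa, (s i : ℝ) ^ γ
      = ∑ i ∈ Pb, (s i : ℝ) ^ γ + ∑ i ∈ Pa \ Pb, (s i : ℝ) ^ γ := by linarith
    _ ≤ _ := add_le_add hb hd
    _ = _ := by ring

theorem combinatorial_power_sum_estimate {ι : Type*} [DecidableEq ι]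
    (β c C ε γ : ℝ) (n : ℕ) (hβ : 0 < β) (hβ1 : β < 1)
    (hγ : γ ∈ Set.Ioo (0 : ℝ) 1) (hc : 0 < c) (hε : 0 < ε)
    (hC : C ∈ Set.Ioo (0 : ℝ) 1)
    (Pa Pb : Finset ι) (s : ι → ℕ)
    (hs : ∀ i ∈ Pa, 1 ≤ s i) (hsum : ∑ i ∈ Pa, s i = 2 ^ n)
    (hcard : (Pa.card : ℝ) ≤ c * (β ^ n)⁻¹)
    (hsub : Pb ⊆ Pa) (hcardb : (Pb.card : ℝ) ≤ ε * c * (β ^ n)⁻¹)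
    (hmass : C * 2 ^ n ≤ (∑ i ∈ Pb, s i : ℝ)) :
    ∑ i ∈ Pa, (s i : ℝ) ^ γ
      ≤ (β ^ n) ^ (γ - 1) * ((2 : ℝ) ^ n) ^ γ
          * ((ε * c) ^ (1 - γ) + c ^ (1 - γ) * (1 - C) ^ γ) :=
  combinatorial_power_sum_estimate_general β c C ε γ n hβ hγ hc hε hC Pa Pb s hsum hcard hsub hcardb
    hmass
end
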